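/- Let S, T be real random variables, let Z_S^(τ), Z_T^(τ) be N(0,τ) random variables independent of (S,T) and of each other, and set X = S + Z_S^(τ), Y = T + Z_T^(τ), with joint density p_{X,Y} and marginal densities p_X, p_Y. Then for all x, y ∈ ℝ: (i) |p_{X,Y}(x,y) − p_X(x)·p_Y(y)| ≤ (2/(πτ))·α(S,T), and (ii) |∂p_{X,Y}/∂x (x,y) − p_X'(x)·p_Y(y)| ≤ (2·exp(−1/2)/(π·τ^{3/2}))·α(S,T). -/

import Mathlib

open MeasureTheory ProbabilityTheory Real Filter Set
open scoped ENNReal NNReal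

noncomputable section

/-- The score function `p'/p` associated with a density `p`. -/
def score (p : ℝ → ℝ) (u : ℝ) : ℝ := deriv p u / p u

/-- The score of a joint density in the first coordinate. -/
def score1 (p : ℝ × ℝ → ℝ) (z : ℝ × ℝ) : ℝ := deriv (fun x => p (x, z.2)) z.1 / p z

/-- The score of a joint density in the second coordinate. -/
def score2 (p : ℝ × ℝ → ℝ) (z : ℝ × ℝ) : ℝ := deriv (fun y => p (z.1, y)) z.2 / p z

/-- The function `M_{a,b}` built from a joint density `p` of `(X,Y)` and marginal
densities `pX`, `pY`. -/
def Mab (p : ℝ × ℝ → ℝ) (pX pY : ℝ → ℝ) (a b : ℝ) (z : ℝ × ℝ) : ℝ :=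
  a * (score1 p z - score pX z.1) + b * (score2 p z - score pY z.2)

variable {Ω : Type} [MeasureSpace Ω]

/-- `p : ℝ → ℝ` is a density of the real random variable `U`. -/
def HasDens (U : Ω → ℝ) (p : ℝ → ℝ) : Prop :=
  Measurable U ∧ Measure.map U ℙ = volume.withDensity fun x => ENNReal.ofReal (p x)

/-- `p : ℝ × ℝ → ℝ` is a joint density of the pair `(X, Y)`. -/
def HasDens2 (X Y : Ω → ℝ) (p : ℝ × ℝ → ℝ) : Prop :=
  Measurable X ∧ Measurable Y ∧
    Measure.map (fun ω => (X ω, Y ω)) ℙ = volume.withDensity fun z => ENNReal.ofReal (p z)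

/-- The Fisher information `J(U) = E[(p'/p)(U)^2]` of `U`, computed via a density `p` of `U`. -/
def fisherInfo (U : Ω → ℝ) (p : ℝ → ℝ) : ℝ := ∫ ω, (score p (U ω)) ^ 2

/-- The standardised Fisher information `J_st(U) = Var(U)·J(U) - 1`. -/
def stdFisherInfo (U : Ω → ℝ) (p : ℝ → ℝ) : ℝ := Var[U] * fisherInfo U p - 1

/-- The α-mixing coefficient between two real random variables. -/
def alphaMix (S T : Ω → ℝ) : ℝ :=
  sSup {x | ∃ A B : Set ℝ, MeasurableSet A ∧ MeasurableSet B ∧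
    x = |(ℙ (S ⁻¹' A ∩ T ⁻¹' B)).toReal - (ℙ (S ⁻¹' A)).toReal * (ℙ (T ⁻¹' B)).toReal|}

/-- `Z` is a centred Gaussian random variable with variance `v`. -/
def IsGaussRV (Z : Ω → ℝ) (v : ℝ) : Prop :=
  Measurable Z ∧ Measure.map Z ℙ = gaussianReal 0 v.toNNReal

/-- The density of an `N(0,s)` Gaussian. -/
def gaussDens (s u : ℝ) : ℝ := (Real.sqrt (2 * π * s))⁻¹ * Real.exp (-u ^ 2 / (2 * s))

/-- The relative entropy `D(f ‖ φ)` of a density `f` with respect to the standard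
normal density. -/
def relEntGauss (f : ℝ → ℝ) : ℝ := ∫ x, f x * Real.log (f x / gaussDens 1 x)

/-- `Δ(X, Y, β)`, computed via densities `pX`, `pY` of `X`, `Y` and a density `r` of
`√β X + √(1-β) Y`. -/
def Δfn (X Y : Ω → ℝ) (pX pY r : ℝ → ℝ) (β : ℝ) : ℝ :=
  ∫ ω, (Real.sqrt β * score pX (X ω) + Real.sqrt (1 - β) * score pY (Y ω)
      - score r (Real.sqrt β * X ω + Real.sqrt (1 - β) * Y ω)) ^ 2

/-- Membership in the class `C_ψ`: uniform control of the tails of `X²`. -/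
def MemC (ψ : ℝ → ℝ) (X : Ω → ℝ) : Prop :=
  ∀ R : ℝ, 0 ≤ R →
    (∫ ω, if R * Real.sqrt Var[X] ≤ |X ω| then (X ω) ^ 2 else 0) ≤ Var[X] * ψ R

/-- Covariance of two real random variables. -/
def cov (X Y : Ω → ℝ) : ℝ := ∫ ω, (X ω - ∫ ω', X ω') * (Y ω - ∫ ω', Y ω')

/-- The pair `(S,T)` is independent of the pair of perturbations `(Z_S, Z_T)`, and the
perturbations are independent of each other. -/
def PerturbIndep (S T ZS ZT : Ω → ℝ) : Prop :=
  IndepFun (fun ω => (S ω, T ω)) (fun ω => (ZS ω, ZT ω)) ℙ ∧ IndepFun ZS ZT ℙ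

/-- Stationarity of a doubly infinite sequence of random variables. -/
def IsStationarySeq (X : ℤ → Ω → ℝ) : Prop :=
  ∀ k : ℤ, Measure.map (fun ω => fun i => X (i + k) ω) ℙ
    = Measure.map (fun ω => fun i => X i ω) ℙ

/-- The process α-mixing coefficient `α(t)`: mixing between the σ-field of the past
`σ(…, X_{-1}, X_0)` and that of the future `σ(X_t, X_{t+1}, …)`. -/
def procAlpha (X : ℤ → Ω → ℝ) (t : ℕ) : ℝ :=
  sSup {x | ∃ A B : Set Ω,
    MeasurableSet[⨆ i ∈ Iic (0 : ℤ), MeasurableSpace.comap (X i) inferInstance] A ∧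
    MeasurableSet[⨆ i ∈ Ici (t : ℤ), MeasurableSpace.comap (X i) inferInstance] B ∧
    x = |(ℙ (A ∩ B)).toReal - (ℙ A).toReal * (ℙ B).toReal|}


section Aux
variable {Ω : Type} [MeasureSpace Ω]


lemma alphaMix_bddAbove [IsProbabilityMeasure (ℙ : Measure Ω)] (S T : Ω → ℝ) :
    BddAbove {x | ∃ A B : Set ℝ, MeasurableSet A ∧ MeasurableSet B ∧
    x = |(ℙ (S ⁻¹' A ∩ T ⁻¹' B)).toReal - (ℙ (S ⁻¹' A)).toReal * (ℙ (T ⁻¹' B)).toReal|} := by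
  refine ⟨1, ?_⟩
  rintro x ⟨A, B, hA, hB, rfl⟩
  have h1 : (ℙ (S ⁻¹' A ∩ T ⁻¹' B)).toReal ≤ 1 := by
    simpa using ENNReal.toReal_mono (by simp) (prob_le_one (μ := (ℙ : Measure Ω)))
  have h1' : (0:ℝ) ≤ (ℙ (S ⁻¹' A ∩ T ⁻¹' B)).toReal := ENNReal.toReal_nonneg
  have h2 : (ℙ (S ⁻¹' A)).toReal ≤ 1 := by
    simpa using ENNReal.toReal_mono (by simp) (prob_le_one (μ := (ℙ : Measure Ω)))
  have h3 : (ℙ (T ⁻¹' B)).toReal ≤ 1 := by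
    simpa using ENNReal.toReal_mono (by simp) (prob_le_one (μ := (ℙ : Measure Ω)))
  have h4 : (0:ℝ) ≤ (ℙ (S ⁻¹' A)).toReal * (ℙ (T ⁻¹' B)).toReal :=
    mul_nonneg ENNReal.toReal_nonneg ENNReal.toReal_nonneg
  have h2' : (0:ℝ) ≤ (ℙ (S ⁻¹' A)).toReal := ENNReal.toReal_nonneg
  have h3' : (0:ℝ) ≤ (ℙ (T ⁻¹' B)).toReal := ENNReal.toReal_nonneg
  rw [abs_le]
  constructor <;> nlinarith

lemma alphaMix_nonneg [IsProbabilityMeasure (ℙ : Measure Ω)] (S T : Ω → ℝ) :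
    0 ≤ alphaMix S T := by
  refine le_csSup (alphaMix_bddAbove S T) ⟨∅, ∅, MeasurableSet.empty, MeasurableSet.empty, ?_⟩
  simp

lemma abs_le_alphaMix [IsProbabilityMeasure (ℙ : Measure Ω)] (S T : Ω → ℝ)
    {A B : Set ℝ} (hA : MeasurableSet A) (hB : MeasurableSet B) :
    |(ℙ (S ⁻¹' A ∩ T ⁻¹' B)).toReal - (ℙ (S ⁻¹' A)).toReal * (ℙ (T ⁻¹' B)).toReal|
      ≤ alphaMix S T :=
  le_csSup (alphaMix_bddAbove S T) ⟨A, B, hA, hB, rfl⟩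

/-- ENNReal version of the mixing bound. -/
lemma meas_inter_le_add [IsProbabilityMeasure (ℙ : Measure Ω)] (S T : Ω → ℝ)
    {A B : Set ℝ} (hA : MeasurableSet A) (hB : MeasurableSet B) :
    ℙ (S ⁻¹' A ∩ T ⁻¹' B) ≤ ℙ (S ⁻¹' A) * ℙ (T ⁻¹' B) + ENNReal.ofReal (alphaMix S T) ∧
    ℙ (S ⁻¹' A) * ℙ (T ⁻¹' B) ≤ ℙ (S ⁻¹' A ∩ T ⁻¹' B) + ENNReal.ofReal (alphaMix S T) := by
  have habs := abs_le_alphaMix S T hA hB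
  set x := (ℙ (S ⁻¹' A ∩ T ⁻¹' B)).toReal with hx
  set y := (ℙ (S ⁻¹' A)).toReal * (ℙ (T ⁻¹' B)).toReal with hy
  have hxy : |x - y| ≤ alphaMix S T := habs
  have hfin1 : ℙ (S ⁻¹' A ∩ T ⁻¹' B) ≠ ⊤ := measure_ne_top _ _
  have hfin2 : ℙ (S ⁻¹' A) ≠ ⊤ := measure_ne_top _ _
  have hfin3 : ℙ (T ⁻¹' B) ≠ ⊤ := measure_ne_top _ _
  have e1 : ℙ (S ⁻¹' A ∩ T ⁻¹' B) = ENNReal.ofReal x := (ENNReal.ofReal_toReal hfin1).symm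
  have e2 : ℙ (S ⁻¹' A) * ℙ (T ⁻¹' B) = ENNReal.ofReal y := by
    rw [hy, ENNReal.ofReal_mul ENNReal.toReal_nonneg, ENNReal.ofReal_toReal hfin2,
      ENNReal.ofReal_toReal hfin3]
  rw [e1, e2]
  rw [abs_le] at hxy
  constructor
  · calc ENNReal.ofReal x ≤ ENNReal.ofReal (y + alphaMix S T) :=
        ENNReal.ofReal_le_ofReal (by linarith [hxy.2])
    _ = ENNReal.ofReal y + ENNReal.ofReal (alphaMix S T) :=
        ENNReal.ofReal_add (mul_nonneg ENNReal.toReal_nonneg ENNReal.toReal_nonneg)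
          (alphaMix_nonneg S T)
  · calc ENNReal.ofReal y ≤ ENNReal.ofReal (x + alphaMix S T) :=
        ENNReal.ofReal_le_ofReal (by linarith [hxy.1])
    _ = ENNReal.ofReal x + ENNReal.ofReal (alphaMix S T) :=
        ENNReal.ofReal_add ENNReal.toReal_nonneg (alphaMix_nonneg S T)

/-- truncation of a set lintegral when the integrand vanishes above `M`. -/
lemma trunc_lintegral {H : ℝ → ℝ≥0∞} {M : ℝ} (hM : 0 < M) (h0 : ∀ u, M ≤ u → H u = 0) :
    ∫⁻ u in Ioi (0:ℝ), H u = ∫⁻ u in Ioo (0:ℝ) M, H u := by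
  rw [← Ioo_union_Ici_eq_Ioi hM, lintegral_union measurableSet_Ici
    (by
      refine Set.disjoint_left.mpr ?_
      intro u hu hu'
      exact absurd (h0 u hu') (by intro _; exact (not_lt.mpr hu') hu.2) )]
  have : ∫⁻ u in Ici M, H u = 0 := by
    rw [setLIntegral_congr_fun measurableSet_Ici (fun u hu => h0 u hu)]
    simp
  rw [this, add_zero]

lemma key_cov [IsProbabilityMeasure (ℙ : Measure Ω)]
    (S T : Ω → ℝ) (hS : Measurable S) (hT : Measurable T)
    (f g : ℝ → ℝ) (hf : Measurable f) (hg : Measurable g)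
    (M N : ℝ) (hM : 0 < M) (hN : 0 < N)
    (hf0 : ∀ s, 0 ≤ f s) (hfM : ∀ s, f s ≤ M) (hg0 : ∀ t, 0 ≤ g t) (hgN : ∀ t, g t ≤ N) :
    |(∫ ω, f (S ω) * g (T ω)) - (∫ ω, f (S ω)) * ∫ ω, g (T ω)|
      ≤ M * N * alphaMix S T := by
  set U : Ω → ℝ := fun ω => f (S ω) with hU
  set V : Ω → ℝ := fun ω => g (T ω) with hV
  have hUm : Measurable U := hf.comp hS
  have hVm : Measurable V := hg.comp hT
  have hU0 : ∀ ω, 0 ≤ U ω := fun ω => hf0 _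
  have hV0 : ∀ ω, 0 ≤ V ω := fun ω => hg0 _
  -- measurable tail sets
  have hmeasU : ∀ u : ℝ, MeasurableSet {ω | u < U ω} := fun u => measurableSet_lt
    measurable_const hUm
  have hmeasV : ∀ v : ℝ, MeasurableSet {ω | v < V ω} := fun v => measurableSet_lt
    measurable_const hVm
  -- the joint layer-cake
  set ν : Measure Ω := (ℙ : Measure Ω).withDensity (fun ω => ENNReal.ofReal (V ω)) with hν
  have step1 : ∫⁻ ω, ENNReal.ofReal (U ω) ∂ν = ∫⁻ u in Ioi (0:ℝ), ν {ω | u < U ω} :=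
    lintegral_eq_lintegral_meas_lt ν (Eventually.of_forall hU0) hUm.aemeasurable
  have step2 : ∫⁻ ω, ENNReal.ofReal (U ω) ∂ν
      = ∫⁻ ω, ENNReal.ofReal (U ω) * ENNReal.ofReal (V ω) ∂ℙ := by
    rw [hν, lintegral_withDensity_eq_lintegral_mul _ (by fun_prop) (by fun_prop)]
    congr 1
    ext ω
    simp [mul_comm]
  have step3 : ∀ u : ℝ, ν {ω | u < U ω}
      = ∫⁻ v in Ioi (0:ℝ), ℙ ({ω | v < V ω} ∩ {ω | u < U ω}) := by
    intro u
    rw [hν, withDensity_apply _ (hmeasU u)]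
    have : ∫⁻ ω in {ω | u < U ω}, ENNReal.ofReal (V ω) ∂ℙ
        = ∫⁻ v in Ioi (0:ℝ), ((ℙ : Measure Ω).restrict {ω | u < U ω}) {ω | v < V ω} :=
      lintegral_eq_lintegral_meas_lt _ (Eventually.of_forall hV0) hVm.aemeasurable
    rw [this]
    refine lintegral_congr fun v => ?_
    rw [Measure.restrict_apply (hmeasV v)]
  -- joint identity
  have joint : ∫⁻ ω, ENNReal.ofReal (U ω) * ENNReal.ofReal (V ω) ∂ℙ
      = ∫⁻ u in Ioi (0:ℝ), ∫⁻ v in Ioi (0:ℝ), ℙ ({ω | v < V ω} ∩ {ω | u < U ω}) := by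
    rw [← step2, step1]
    exact lintegral_congr fun u => step3 u
  -- single layer cakes
  have singleU : ∫⁻ ω, ENNReal.ofReal (U ω) ∂ℙ = ∫⁻ u in Ioi (0:ℝ), ℙ {ω | u < U ω} :=
    lintegral_eq_lintegral_meas_lt ℙ (Eventually.of_forall hU0) hUm.aemeasurable
  have singleV : ∫⁻ ω, ENNReal.ofReal (V ω) ∂ℙ = ∫⁻ v in Ioi (0:ℝ), ℙ {ω | v < V ω} :=
    lintegral_eq_lintegral_meas_lt ℙ (Eventually.of_forall hV0) hVm.aemeasurable
  have hmeasPV : Measurable fun v => ℙ {ω | v < V ω} :=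
    Antitone.measurable (fun s t hst => measure_mono (fun ω h => lt_of_le_of_lt hst h))
  have hmeasPU : Measurable fun u => ℙ {ω | u < U ω} :=
    Antitone.measurable (fun s t hst => measure_mono (fun ω h => lt_of_le_of_lt hst h))
  have prod_id : (∫⁻ ω, ENNReal.ofReal (U ω) ∂ℙ) * (∫⁻ ω, ENNReal.ofReal (V ω) ∂ℙ)
      = ∫⁻ u in Ioi (0:ℝ), ∫⁻ v in Ioi (0:ℝ), ℙ {ω | u < U ω} * ℙ {ω | v < V ω} := by
    rw [singleU, singleV, ← lintegral_mul_const _ hmeasPU]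
    refine lintegral_congr fun u => ?_
    rw [lintegral_const_mul _ hmeasPV]
  -- set up abbreviations
  set G1 : ℝ → ℝ → ℝ≥0∞ := fun u v => ℙ ({ω | v < V ω} ∩ {ω | u < U ω}) with hG1
  set G2 : ℝ → ℝ → ℝ≥0∞ := fun u v => ℙ {ω | u < U ω} * ℙ {ω | v < V ω} with hG2
  set c : ℝ≥0∞ := ENNReal.ofReal (alphaMix S T) with hc
  -- vanishing above M / N
  have hUempty : ∀ u : ℝ, M ≤ u → {ω | u < U ω} = ∅ := by
    intro u hu; ext ω; simp only [mem_setOf_eq, mem_empty_iff_false, iff_false, not_lt]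
    exact le_trans (hfM _) hu
  have hVempty : ∀ v : ℝ, N ≤ v → {ω | v < V ω} = ∅ := by
    intro v hv; ext ω; simp only [mem_setOf_eq, mem_empty_iff_false, iff_false, not_lt]
    exact le_trans (hgN _) hv
  have hG1zU : ∀ u, M ≤ u → ∀ v, G1 u v = 0 := by
    intro u hu v; rw [hG1]; simp [hUempty u hu]
  have hG2zU : ∀ u, M ≤ u → ∀ v, G2 u v = 0 := by
    intro u hu v; rw [hG2]; simp [hUempty u hu]
  have hG1zV : ∀ v, N ≤ v → ∀ u, G1 u v = 0 := by
    intro v hv u; rw [hG1]; simp [hVempty v hv]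
  have hG2zV : ∀ v, N ≤ v → ∀ u, G2 u v = 0 := by
    intro v hv u; rw [hG2]; simp [hVempty v hv]
  -- truncated versions
  have truncG1 : ∫⁻ u in Ioi (0:ℝ), ∫⁻ v in Ioi (0:ℝ), G1 u v
      = ∫⁻ u in Ioo (0:ℝ) M, ∫⁻ v in Ioo (0:ℝ) N, G1 u v := by
    rw [trunc_lintegral hM (fun u hu => by simp [hG1zU u hu])]
    exact lintegral_congr fun u => trunc_lintegral hN (fun v hv => hG1zV v hv u)
  have truncG2 : ∫⁻ u in Ioi (0:ℝ), ∫⁻ v in Ioi (0:ℝ), G2 u v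
      = ∫⁻ u in Ioo (0:ℝ) M, ∫⁻ v in Ioo (0:ℝ) N, G2 u v := by
    rw [trunc_lintegral hM (fun u hu => by simp [hG2zU u hu])]
    exact lintegral_congr fun u => trunc_lintegral hN (fun v hv => hG2zV v hv u)
  -- pointwise mixing bounds
  have hpt : ∀ u v : ℝ, G1 u v ≤ G2 u v + c ∧ G2 u v ≤ G1 u v + c := by
    intro u v
    have hA : MeasurableSet {s : ℝ | u < f s} := measurableSet_lt measurable_const hf
    have hB : MeasurableSet {t : ℝ | v < g t} := measurableSet_lt measurable_const hg
    have h := meas_inter_le_add S T hA hB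
    have e1 : S ⁻¹' {s | u < f s} = {ω | u < U ω} := rfl
    have e2 : T ⁻¹' {t | v < g t} = {ω | v < V ω} := rfl
    rw [e1, e2] at h
    constructor
    · calc G1 u v = ℙ ({ω | u < U ω} ∩ {ω | v < V ω}) := by rw [hG1, inter_comm]
      _ ≤ ℙ {ω | u < U ω} * ℙ {ω | v < V ω} + c := h.1
      _ = G2 u v + c := rfl
    · calc G2 u v = ℙ {ω | u < U ω} * ℙ {ω | v < V ω} := rfl
      _ ≤ ℙ ({ω | u < U ω} ∩ {ω | v < V ω}) + c := h.2
      _ = G1 u v + c := by rw [hG1, inter_comm]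
  -- integrated bounds on the truncated region
  have hbox : ∀ (G G' : ℝ → ℝ → ℝ≥0∞), (∀ u v, G u v ≤ G' u v + c) →
      ∫⁻ u in Ioo (0:ℝ) M, ∫⁻ v in Ioo (0:ℝ) N, G u v
        ≤ (∫⁻ u in Ioo (0:ℝ) M, ∫⁻ v in Ioo (0:ℝ) N, G' u v)
          + c * ENNReal.ofReal N * ENNReal.ofReal M := by
    intro G G' hGG'
    calc ∫⁻ u in Ioo (0:ℝ) M, ∫⁻ v in Ioo (0:ℝ) N, G u v
        ≤ ∫⁻ u in Ioo (0:ℝ) M, ∫⁻ v in Ioo (0:ℝ) N, (G' u v + c) :=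
          lintegral_mono fun u => lintegral_mono fun v => hGG' u v
      _ = ∫⁻ u in Ioo (0:ℝ) M, ((∫⁻ v in Ioo (0:ℝ) N, G' u v) + c * ENNReal.ofReal N) := by
          refine lintegral_congr fun u => ?_
          rw [lintegral_add_right _ measurable_const, setLIntegral_const, Real.volume_Ioo,
            sub_zero]
      _ = (∫⁻ u in Ioo (0:ℝ) M, ∫⁻ v in Ioo (0:ℝ) N, G' u v)
          + (c * ENNReal.ofReal N) * ENNReal.ofReal M := by
          rw [lintegral_add_right _ measurable_const, setLIntegral_const, Real.volume_Ioo,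
            sub_zero]
  -- finiteness
  have hfin : ∀ (G : ℝ → ℝ → ℝ≥0∞), (∀ u v, G u v ≤ 1) →
      ∫⁻ u in Ioo (0:ℝ) M, ∫⁻ v in Ioo (0:ℝ) N, G u v ≠ ⊤ := by
    intro G hG
    have : ∫⁻ u in Ioo (0:ℝ) M, ∫⁻ v in Ioo (0:ℝ) N, G u v
        ≤ ∫⁻ u in Ioo (0:ℝ) M, ∫⁻ v in Ioo (0:ℝ) N, (1:ℝ≥0∞) :=
      lintegral_mono fun u => lintegral_mono fun v => hG u v
    refine ne_top_of_le_ne_top ?_ this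
    rw [setLIntegral_const, setLIntegral_const, Real.volume_Ioo, Real.volume_Ioo]
    simp [ENNReal.mul_ne_top, ENNReal.ofReal_ne_top]
  have hG1le1 : ∀ u v, G1 u v ≤ 1 := fun u v => prob_le_one
  have hG2le1 : ∀ u v, G2 u v ≤ 1 := fun u v =>
    le_trans (mul_le_mul' prob_le_one prob_le_one) (by simp)
  have hAfin : (∫⁻ u in Ioo (0:ℝ) M, ∫⁻ v in Ioo (0:ℝ) N, G1 u v) ≠ ⊤ := hfin G1 hG1le1
  have hBfin : (∫⁻ u in Ioo (0:ℝ) M, ∫⁻ v in Ioo (0:ℝ) N, G2 u v) ≠ ⊤ := hfin G2 hG2le1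
  have hAB := hbox G1 G2 (fun u v => (hpt u v).1)
  have hBA := hbox G2 G1 (fun u v => (hpt u v).2)
  -- convert to real
  have hUVint : ∫ ω, U ω * V ω ∂ℙ
      = (∫⁻ u in Ioo (0:ℝ) M, ∫⁻ v in Ioo (0:ℝ) N, G1 u v).toReal := by
    rw [integral_eq_lintegral_of_nonneg_ae
      (Eventually.of_forall fun ω => mul_nonneg (hU0 ω) (hV0 ω))
      ((hUm.mul hVm).aestronglyMeasurable)]
    congr 1
    rw [← truncG1, ← joint]
    exact lintegral_congr fun ω => ENNReal.ofReal_mul (hU0 ω)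
  have hUint : ∫ ω, U ω ∂ℙ = (∫⁻ ω, ENNReal.ofReal (U ω) ∂ℙ).toReal :=
    integral_eq_lintegral_of_nonneg_ae (Eventually.of_forall hU0) hUm.aestronglyMeasurable
  have hVint : ∫ ω, V ω ∂ℙ = (∫⁻ ω, ENNReal.ofReal (V ω) ∂ℙ).toReal :=
    integral_eq_lintegral_of_nonneg_ae (Eventually.of_forall hV0) hVm.aestronglyMeasurable
  have hprod : (∫ ω, U ω ∂ℙ) * ∫ ω, V ω ∂ℙ
      = (∫⁻ u in Ioo (0:ℝ) M, ∫⁻ v in Ioo (0:ℝ) N, G2 u v).toReal := by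
    rw [hUint, hVint, ← ENNReal.toReal_mul]
    congr 1
    rw [← truncG2, ← prod_id]
  have hKtoReal : (c * ENNReal.ofReal N * ENNReal.ofReal M).toReal
      = alphaMix S T * N * M := by
    rw [ENNReal.toReal_mul, ENNReal.toReal_mul, hc, ENNReal.toReal_ofReal (alphaMix_nonneg S T),
      ENNReal.toReal_ofReal hN.le, ENNReal.toReal_ofReal hM.le]
  have hKfin : c * ENNReal.ofReal N * ENNReal.ofReal M ≠ ⊤ := by
    simp [hc, ENNReal.mul_ne_top, ENNReal.ofReal_ne_top]
  have h1 : (∫⁻ u in Ioo (0:ℝ) M, ∫⁻ v in Ioo (0:ℝ) N, G1 u v).toReal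
      ≤ (∫⁻ u in Ioo (0:ℝ) M, ∫⁻ v in Ioo (0:ℝ) N, G2 u v).toReal
        + alphaMix S T * N * M := by
    have := ENNReal.toReal_mono (by simp [ENNReal.add_ne_top, hBfin, hKfin]) hAB
    rwa [ENNReal.toReal_add hBfin hKfin, hKtoReal] at this
  have h2 : (∫⁻ u in Ioo (0:ℝ) M, ∫⁻ v in Ioo (0:ℝ) N, G2 u v).toReal
      ≤ (∫⁻ u in Ioo (0:ℝ) M, ∫⁻ v in Ioo (0:ℝ) N, G1 u v).toReal
        + alphaMix S T * N * M := by
    have := ENNReal.toReal_mono (by simp [ENNReal.add_ne_top, hAfin, hKfin]) hBA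
    rwa [ENNReal.toReal_add hAfin hKfin, hKtoReal] at this
  have final : |(∫ ω, U ω * V ω ∂ℙ) - (∫ ω, U ω ∂ℙ) * ∫ ω, V ω ∂ℙ|
      ≤ M * N * alphaMix S T := by
    rw [hUVint, hprod, abs_le]
    constructor <;> nlinarith [h1, h2]
  exact final

lemma key_cov_signed [IsProbabilityMeasure (ℙ : Measure Ω)]
    (S T : Ω → ℝ) (hS : Measurable S) (hT : Measurable T)
    (f g : ℝ → ℝ) (hf : Measurable f) (hg : Measurable g)
    (M N : ℝ) (hM : 0 < M) (hN : 0 < N)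
    (hfM : ∀ s, |f s| ≤ M) (hg0 : ∀ t, 0 ≤ g t) (hgN : ∀ t, g t ≤ N) :
    |(∫ ω, f (S ω) * g (T ω)) - (∫ ω, f (S ω)) * ∫ ω, g (T ω)|
      ≤ 2 * M * N * alphaMix S T := by
  set fp : ℝ → ℝ := fun s => max (f s) 0 with hfp
  set fm : ℝ → ℝ := fun s => max (-f s) 0 with hfm
  have hfpm : Measurable fp := hf.max measurable_const
  have hfmm : Measurable fm := hf.neg.max measurable_const
  have hfp0 : ∀ s, 0 ≤ fp s := fun s => le_max_right _ _
  have hfm0 : ∀ s, 0 ≤ fm s := fun s => le_max_right _ _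
  have hfpM : ∀ s, fp s ≤ M := fun s =>
    max_le (le_trans (le_abs_self _) (hfM s)) hM.le
  have hfmM : ∀ s, fm s ≤ M := fun s =>
    max_le (le_trans (neg_le_abs _) (hfM s)) hM.le
  have hsub : ∀ s, f s = fp s - fm s := fun s => by
    rw [hfp, hfm]; simp only [max_def]; split_ifs <;> simp_all <;> linarith
  -- integrability
  have hint : ∀ (h : ℝ → ℝ) (hm : Measurable h) (C : ℝ), (∀ s, |h s| ≤ C) →
      Integrable (fun ω => h (S ω)) ℙ := by
    intro h hm C hC
    exact (integrable_const C).mono' (hm.comp hS).aestronglyMeasurable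
      (Eventually.of_forall fun ω => by simpa using hC (S ω))
  have hgS : Integrable (fun ω => g (T ω)) ℙ :=
    (integrable_const N).mono' (hg.comp hT).aestronglyMeasurable
      (Eventually.of_forall fun ω => by
        rw [Real.norm_eq_abs, abs_of_nonneg (hg0 _)]; exact hgN _)
  have hintpg : Integrable (fun ω => fp (S ω) * g (T ω)) ℙ :=
    (integrable_const (M * N)).mono' ((hfpm.comp hS).mul (hg.comp hT)).aestronglyMeasurable
      (Eventually.of_forall fun ω => by
        rw [Real.norm_eq_abs, abs_mul, abs_of_nonneg (hfp0 _), abs_of_nonneg (hg0 _)]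
        exact mul_le_mul (hfpM _) (hgN _) (hg0 _) hM.le)
  have hintmg : Integrable (fun ω => fm (S ω) * g (T ω)) ℙ :=
    (integrable_const (M * N)).mono' ((hfmm.comp hS).mul (hg.comp hT)).aestronglyMeasurable
      (Eventually.of_forall fun ω => by
        rw [Real.norm_eq_abs, abs_mul, abs_of_nonneg (hfm0 _), abs_of_nonneg (hg0 _)]
        exact mul_le_mul (hfmM _) (hgN _) (hg0 _) hM.le)
  have hintp : Integrable (fun ω => fp (S ω)) ℙ := hint fp hfpm M
    (fun s => by rw [abs_of_nonneg (hfp0 s)]; exact hfpM s)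
  have hintm : Integrable (fun ω => fm (S ω)) ℙ := hint fm hfmm M
    (fun s => by rw [abs_of_nonneg (hfm0 s)]; exact hfmM s)
  have e1 : (∫ ω, f (S ω) * g (T ω))
      = (∫ ω, fp (S ω) * g (T ω)) - ∫ ω, fm (S ω) * g (T ω) := by
    rw [← integral_sub hintpg hintmg]
    refine integral_congr_ae (Eventually.of_forall fun ω => ?_)
    simp only; rw [hsub (S ω)]; ring
  have e2 : (∫ ω, f (S ω)) = (∫ ω, fp (S ω)) - ∫ ω, fm (S ω) := by
    rw [← integral_sub hintp hintm]
    refine integral_congr_ae (Eventually.of_forall fun ω => ?_)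
    simp only; rw [hsub (S ω)]
  have b1 := key_cov S T hS hT fp g hfpm hg M N hM hN hfp0 hfpM hg0 hgN
  have b2 := key_cov S T hS hT fm g hfmm hg M N hM hN hfm0 hfmM hg0 hgN
  rw [e1, e2]
  have : (∫ ω, fp (S ω) * g (T ω)) - (∫ ω, fm (S ω) * g (T ω))
      - ((∫ ω, fp (S ω)) - ∫ ω, fm (S ω)) * ∫ ω, g (T ω)
      = ((∫ ω, fp (S ω) * g (T ω)) - (∫ ω, fp (S ω)) * ∫ ω, g (T ω))
        - ((∫ ω, fm (S ω) * g (T ω)) - (∫ ω, fm (S ω)) * ∫ ω, g (T ω)) := by ring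
  rw [this]
  calc |_| ≤ |(∫ ω, fp (S ω) * g (T ω)) - (∫ ω, fp (S ω)) * ∫ ω, g (T ω)|
        + |(∫ ω, fm (S ω) * g (T ω)) - (∫ ω, fm (S ω)) * ∫ ω, g (T ω)| := abs_sub _ _
    _ ≤ M * N * alphaMix S T + M * N * alphaMix S T := add_le_add b1 b2
    _ = 2 * M * N * alphaMix S T := by ring

lemma gauss_prod (v : ℝ≥0) (hv : v ≠ 0) :
    (gaussianReal 0 v).prod (gaussianReal 0 v)
      = (volume : Measure (ℝ×ℝ)).withDensity
          (fun z => gaussianPDF 0 v z.1 * gaussianPDF 0 v z.2) := by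
  refine Measure.prod_eq fun s t hs ht => ?_
  rw [Measure.volume_eq_prod ℝ ℝ, withDensity_apply _ (hs.prod ht), ← Measure.prod_restrict,
    lintegral_prod_mul (measurable_gaussianPDF 0 v).aemeasurable
      (measurable_gaussianPDF 0 v).aemeasurable,
    gaussianReal_apply 0 hv s, gaussianReal_apply 0 hv t]

/-- Convolution of a measure with a measure having a density w.r.t. Haar measure. -/
lemma conv_withDensity {G : Type} [MeasureSpace G] [AddCommGroup G] [MeasurableAdd₂ G]
    [MeasurableSub₂ G] [SFinite (volume : Measure G)]
    [Measure.IsAddLeftInvariant (volume : Measure G)]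
    (μ : Measure G) [SFinite μ] (d : G → ℝ≥0∞) (hd : Measurable d) :
    Measure.map (fun q : G × G => q.1 + q.2) (μ.prod (volume.withDensity d))
      = volume.withDensity (fun z => ∫⁻ w, d (z - w) ∂μ) := by
  have hsubm : Measurable fun p : G × G => d (p.2 - p.1) :=
    hd.comp (measurable_snd.sub measurable_fst)
  have hq : Measurable fun z => ∫⁻ w, d (z - w) ∂μ := by
    have : Measurable (Function.uncurry fun z w => d (z - w)) :=
      hd.comp (measurable_fst.sub measurable_snd)
    exact this.lintegral_prod_right
  ext E hE
  rw [Measure.map_apply measurable_add hE, withDensity_apply _ hE,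
    Measure.prod_apply (measurable_add hE)]
  have step : ∀ w : G, (volume.withDensity d) (Prod.mk w ⁻¹' ((fun q : G × G => q.1 + q.2) ⁻¹' E))
      = ∫⁻ x in E, d (x - w) := by
    intro w
    have hset : (Prod.mk w ⁻¹' ((fun q : G × G => q.1 + q.2) ⁻¹' E)) = (fun z => w + z) ⁻¹' E := rfl
    have hmeas : MeasurableSet ((fun z => w + z) ⁻¹' E) := (measurable_const_add w) hE
    rw [hset, withDensity_apply _ hmeas, ← lintegral_indicator hmeas]
    have hpt : ∀ z : G, ((fun z => w + z) ⁻¹' E).indicator d z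
        = E.indicator (fun x => d (x - w)) (w + z) := by
      intro z
      by_cases hz : w + z ∈ E
      · rw [indicator_of_mem (by exact hz) , indicator_of_mem hz]
        simp
      · rw [indicator_of_notMem (by exact hz), indicator_of_notMem hz]
    rw [lintegral_congr hpt, lintegral_add_left_eq_self (E.indicator fun x => d (x - w)) w,
      lintegral_indicator hE]
  rw [lintegral_congr step]
  rw [lintegral_lintegral_swap hsubm.aemeasurable]

/-- Density of the sum of independent random variables, one having a density. -/
lemma map_sum_dens {G : Type} [MeasureSpace G] [AddCommGroup G] [MeasurableAdd₂ G]
    [MeasurableSub₂ G] [SFinite (volume : Measure G)]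
    [Measure.IsAddLeftInvariant (volume : Measure G)]
    [IsProbabilityMeasure (ℙ : Measure Ω)]
    (W Z : Ω → G) (hW : Measurable W) (hZ : Measurable Z) (hind : IndepFun W Z ℙ)
    (d : G → ℝ≥0∞) (hd : Measurable d)
    (hmap : Measure.map Z ℙ = volume.withDensity d) :
    Measure.map (fun ω => W ω + Z ω) ℙ
      = volume.withDensity (fun z => ∫⁻ w, d (z - w) ∂(Measure.map W ℙ)) := by
  haveI : IsProbabilityMeasure (Measure.map W ℙ) := Measure.isProbabilityMeasure_map hW.aemeasurable
  have h1 : (fun ω => W ω + Z ω)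
      = (fun q : G × G => q.1 + q.2) ∘ (fun ω => (W ω, Z ω)) := rfl
  rw [h1, ← Measure.map_map measurable_add (hW.prodMk hZ),
    (indepFun_iff_map_prod_eq_prod_map_map hW.aemeasurable hZ.aemeasurable).mp hind, hmap,
    conv_withDensity _ d hd]

end Aux

section Aux2

/-- Identification of a continuous density with a continuous positive candidate. -/
lemma dens_identify {α : Type} [MeasureSpace α] [TopologicalSpace α] [OpensMeasurableSpace α]
    [SecondCountableTopology α]
    [SigmaFinite (volume : Measure α)] [(volume : Measure α).IsOpenPosMeasure]
    (μ : Measure α) [IsProbabilityMeasure μ]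
    (k : α → α → ℝ) (hk : Continuous fun zw : α × α => k zw.1 zw.2)
    (C : ℝ) (hkpos : ∀ z w, 0 < k z w) (hkC : ∀ z w, k z w ≤ C)
    (p : α → ℝ) (hp : Continuous p)
    (heq : volume.withDensity (fun z => ENNReal.ofReal (p z))
      = volume.withDensity (fun z => ∫⁻ w, ENNReal.ofReal (k z w) ∂μ))
    (hfin : ∫⁻ z, ENNReal.ofReal (p z) ∂(volume : Measure α) ≠ ⊤) :
    p = fun z => ∫ w, k z w ∂μ := by
  have hkz_cont : ∀ z, Continuous fun w => k z w := fun z => hk.comp (Continuous.prodMk_right z)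
  have hkint : ∀ z, Integrable (fun w => k z w) μ := by
    intro z
    refine (integrable_const C).mono' (hkz_cont z).aestronglyMeasurable ?_
    exact Eventually.of_forall fun w => by
      rw [Real.norm_eq_abs, abs_of_nonneg (hkpos z w).le]; exact hkC z w
  set qR : α → ℝ := fun z => ∫ w, k z w ∂μ with hqR
  have hofReal : ∀ z, ENNReal.ofReal (qR z) = ∫⁻ w, ENNReal.ofReal (k z w) ∂μ := fun z =>
    ofReal_integral_eq_lintegral_ofReal (hkint z)
      (Eventually.of_forall fun w => (hkpos z w).le)
  have hqRpos : ∀ z, 0 < qR z := by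
    intro z
    rw [hqR]
    rw [integral_pos_iff_support_of_nonneg (fun w => (hkpos z w).le) (hkint z)]
    have : Function.support (fun w => k z w) = univ := by
      ext w; simp [Function.support, (hkpos z w).ne']
    rw [this]
    simp [IsProbabilityMeasure.ne_zero μ]
  have hpm : AEMeasurable (fun z => ENNReal.ofReal (p z)) (volume : Measure α) :=
    (ENNReal.measurable_ofReal.comp hp.measurable).aemeasurable
  have hrhsm : AEMeasurable (fun z => ∫⁻ w, ENNReal.ofReal (k z w) ∂μ) (volume : Measure α) := by
    have : Measurable (Function.uncurry fun z w => ENNReal.ofReal (k z w)) :=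
      ENNReal.measurable_ofReal.comp hk.measurable
    exact this.lintegral_prod_right.aemeasurable
  have hae : (fun z => ENNReal.ofReal (p z))
      =ᵐ[(volume : Measure α)] fun z => ∫⁻ w, ENNReal.ofReal (k z w) ∂μ :=
    (withDensity_eq_iff hpm hrhsm hfin).mp heq
  have haeR : p =ᵐ[(volume : Measure α)] qR := by
    filter_upwards [hae] with z hz
    rw [← hofReal z] at hz
    have hq0 : 0 < qR z := hqRpos z
    have hp0 : 0 ≤ p z := by
      by_contra hneg
      push_neg at hneg
      rw [ENNReal.ofReal_eq_zero.mpr hneg.le] at hz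
      exact absurd (ENNReal.ofReal_pos.mpr hq0) (by rw [← hz]; simp)
    exact (ENNReal.ofReal_eq_ofReal_iff hp0 hq0.le).mp hz
  have hqRcont : Continuous qR := by
    refine continuous_of_dominated (bound := fun _ => C) ?_ ?_ (integrable_const C) ?_
    · exact fun z => (hkz_cont z).aestronglyMeasurable
    · exact fun z => Eventually.of_forall fun w => by
        rw [Real.norm_eq_abs, abs_of_nonneg (hkpos z w).le]; exact hkC z w
    · exact Eventually.of_forall fun w => hk.comp (continuous_id.prodMk continuous_const)
  exact (Continuous.ae_eq_iff_eq volume hp hqRcont).mp haeR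

lemma gaussDens_eq {τ : ℝ} (hτ : 0 < τ) (u : ℝ) :
    gaussianPDFReal 0 τ.toNNReal u = gaussDens τ u := by
  rw [gaussianPDFReal, gaussDens, Real.coe_toNNReal τ hτ.le, sub_zero]

lemma gaussDens_pos {τ : ℝ} (hτ : 0 < τ) (u : ℝ) : 0 < gaussDens τ u :=
  mul_pos (inv_pos.mpr (Real.sqrt_pos.mpr (by positivity))) (Real.exp_pos _)

lemma gaussDens_le {τ : ℝ} (hτ : 0 < τ) (u : ℝ) :
    gaussDens τ u ≤ (Real.sqrt (2 * π * τ))⁻¹ := by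
  rw [gaussDens]
  nth_rewrite 2 [← mul_one ((Real.sqrt (2 * π * τ))⁻¹)]
  refine mul_le_mul_of_nonneg_left ?_ (by positivity)
  rw [Real.exp_le_one_iff]
  have : (0:ℝ) ≤ u ^ 2 / (2 * τ) := by positivity
  rw [neg_div]
  linarith

lemma gaussDens_cont {τ : ℝ} : Continuous (gaussDens τ) := by
  unfold gaussDens; fun_prop

lemma gaussDens_hasDeriv {τ : ℝ} (hτ : 0 < τ) (u : ℝ) :
    HasDerivAt (gaussDens τ) (-(u / τ) * gaussDens τ u) u := by
  have h1 : HasDerivAt (fun u : ℝ => -u ^ 2 / (2 * τ)) (-(u / τ)) u := by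
    have := ((hasDerivAt_pow 2 u).neg).div_const (2 * τ)
    refine this.congr_deriv ?_
    field_simp
    ring
  have h2 := (h1.exp).const_mul ((Real.sqrt (2 * π * τ))⁻¹)
  refine h2.congr_deriv ?_
  unfold gaussDens
  ring

lemma aux_abs_exp_bound {τ : ℝ} (hτ : 0 < τ) (u : ℝ) :
    |u| * Real.exp (-u ^ 2 / (2 * τ)) ≤ Real.sqrt τ * Real.exp (-(1/2)) := by
  rcases eq_or_lt_of_le (abs_nonneg u) with h | h
  · rw [← h, zero_mul]; positivity
  · set t := |u| with ht
    have ht2 : t ^ 2 = u ^ 2 := sq_abs u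
    have hsτ : 0 < Real.sqrt τ := Real.sqrt_pos.mpr hτ
    have hx : 0 < t / Real.sqrt τ := div_pos h hsτ
    have hlog : Real.log (t / Real.sqrt τ) ≤ t / Real.sqrt τ - 1 :=
      Real.log_le_sub_one_of_pos hx
    have hx2 : (t / Real.sqrt τ) ^ 2 = t ^ 2 / τ := by rw [div_pow, Real.sq_sqrt hτ.le]
    have hsq : t / Real.sqrt τ - 1 ≤ ((t / Real.sqrt τ) ^ 2 - 1) / 2 := by
      nlinarith [sq_nonneg (t / Real.sqrt τ - 1)]
    have hexp : t / Real.sqrt τ ≤ Real.exp ((t ^ 2 / τ - 1) / 2) := by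
      calc t / Real.sqrt τ = Real.exp (Real.log (t / Real.sqrt τ)) := (Real.exp_log hx).symm
        _ ≤ Real.exp ((t ^ 2 / τ - 1) / 2) := Real.exp_le_exp.mpr (by rw [← hx2]; linarith)
    have hmul : t ≤ Real.sqrt τ * Real.exp ((t ^ 2 / τ - 1) / 2) := by
      rw [div_le_iff₀ hsτ] at hexp
      linarith [hexp]
    calc t * Real.exp (-u ^ 2 / (2 * τ))
        ≤ (Real.sqrt τ * Real.exp ((t ^ 2 / τ - 1) / 2)) * Real.exp (-u ^ 2 / (2 * τ)) :=
          mul_le_mul_of_nonneg_right hmul (Real.exp_nonneg _)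
      _ = Real.sqrt τ * Real.exp ((t ^ 2 / τ - 1) / 2 + -u ^ 2 / (2 * τ)) := by
          rw [mul_assoc, Real.exp_add]
      _ = Real.sqrt τ * Real.exp (-(1/2)) := by
          rw [ht2]; congr 1; congr 1; field_simp; ring

lemma gaussDeriv_abs_le {τ : ℝ} (hτ : 0 < τ) (u : ℝ) :
    |-(u / τ) * gaussDens τ u|
      ≤ Real.exp (-(1/2)) * (Real.sqrt τ)⁻¹ * (Real.sqrt (2 * π * τ))⁻¹ := by
  have hsτ : 0 < Real.sqrt τ := Real.sqrt_pos.mpr hτ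
  have hc : 0 < (Real.sqrt (2 * π * τ))⁻¹ := by positivity
  have key := aux_abs_exp_bound hτ u
  have habs : |-(u / τ) * gaussDens τ u|
      = (Real.sqrt (2 * π * τ))⁻¹ / τ * (|u| * Real.exp (-u ^ 2 / (2 * τ))) := by
    unfold gaussDens
    rw [abs_mul, abs_neg, abs_div, abs_of_pos hτ, abs_mul,
      abs_of_nonneg (by positivity : (0:ℝ) ≤ (Real.sqrt (2 * π * τ))⁻¹),
      abs_of_nonneg (Real.exp_nonneg _)]
    ring
  rw [habs]
  have hstep : (Real.sqrt (2 * π * τ))⁻¹ / τ * (|u| * Real.exp (-u ^ 2 / (2 * τ)))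
      ≤ (Real.sqrt (2 * π * τ))⁻¹ / τ * (Real.sqrt τ * Real.exp (-(1/2))) :=
    mul_le_mul_of_nonneg_left key (by positivity)
  refine hstep.trans (le_of_eq ?_)
  have hinv : (Real.sqrt τ)⁻¹ = Real.sqrt τ / τ := by
    field_simp
    rw [Real.sq_sqrt hτ.le]
  rw [hinv]
  field_simp

lemma hasDerivAt_gauss_integral {α : Type} [MeasurableSpace α] (μ : Measure α)
    [IsProbabilityMeasure μ] {τ : ℝ} (hτ : 0 < τ) (a b : α → ℝ)
    (ha : Measurable a) (hb : Measurable b) (B : ℝ)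
    (hb0 : ∀ w, 0 ≤ b w) (hbB : ∀ w, b w ≤ B) (x : ℝ) :
    HasDerivAt (fun x => ∫ w, gaussDens τ (x - a w) * b w ∂μ)
      (∫ w, -((x - a w) / τ) * gaussDens τ (x - a w) * b w ∂μ) x := by
  set C0 := Real.exp (-(1/2)) * (Real.sqrt τ)⁻¹ * (Real.sqrt (2 * π * τ))⁻¹ with hC0
  have hC0nn : 0 ≤ C0 := by rw [hC0]; positivity
  have hcnn : (0:ℝ) ≤ (Real.sqrt (2 * π * τ))⁻¹ := by positivity
  have hFmeas : ∀ x' : ℝ, AEStronglyMeasurable (fun w => gaussDens τ (x' - a w) * b w) μ :=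
    fun x' => ((gaussDens_cont.measurable.comp (measurable_const.sub ha)).mul
      hb).aestronglyMeasurable
  have hF'meas : AEStronglyMeasurable
      (fun w => -((x - a w) / τ) * gaussDens τ (x - a w) * b w) μ := by
    refine Measurable.aestronglyMeasurable ?_
    have h1 : Measurable fun w => -((x - a w) / τ) :=
      ((measurable_const.sub ha).div_const τ).neg
    exact (h1.mul (gaussDens_cont.measurable.comp (measurable_const.sub ha))).mul hb
  have result := hasDerivAt_integral_of_dominated_loc_of_deriv_le
    (F := fun x' w => gaussDens τ (x' - a w) * b w)
    (F' := fun x' w => -((x' - a w) / τ) * gaussDens τ (x' - a w) * b w)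
    (bound := fun _ => C0 * B) (μ := μ) (x₀ := x) (Metric.ball_mem_nhds x one_pos)
    (Eventually.of_forall hFmeas)
    ((integrable_const ((Real.sqrt (2 * π * τ))⁻¹ * B)).mono' (hFmeas x)
      (Eventually.of_forall fun w => by
        rw [Real.norm_eq_abs, abs_mul, abs_of_pos (gaussDens_pos hτ _),
          abs_of_nonneg (hb0 w)]
        exact mul_le_mul (gaussDens_le hτ _) (hbB w) (hb0 w) hcnn))
    hF'meas
    (Eventually.of_forall fun w => fun x' _ => by
      rw [Real.norm_eq_abs, abs_mul, abs_of_nonneg (hb0 w)]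
      exact mul_le_mul (gaussDeriv_abs_le hτ _) (hbB w) (hb0 w) hC0nn)
    (integrable_const (C0 * B))
    (Eventually.of_forall fun w => fun x' _ => by
      have h1 : HasDerivAt (fun x' : ℝ => x' - a w) 1 x' := (hasDerivAt_id x').sub_const (a w)
      have h2 := ((gaussDens_hasDeriv hτ (x' - a w)).comp x' h1).mul_const (b w)
      refine h2.congr_deriv ?_
      ring)
  exact result.2

end Aux2


section PartE
variable {Ω : Type} [MeasureSpace Ω]

lemma dens_formula_1d [IsProbabilityMeasure (ℙ : Measure Ω)]
    {τ : ℝ} (hτ : 0 < τ) (W Z : Ω → ℝ) (hW : Measurable W) (hZ : Measurable Z)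
    (hind : IndepFun W Z ℙ) (hZg : Measure.map Z ℙ = gaussianReal 0 τ.toNNReal)
    (p : ℝ → ℝ)
    (hp : Measure.map (fun ω => W ω + Z ω) ℙ = volume.withDensity fun x => ENNReal.ofReal (p x))
    (hpc : Continuous p) :
    p = fun x => ∫ w, gaussDens τ (x - w) ∂(Measure.map W ℙ) := by
  haveI : IsProbabilityMeasure (Measure.map W ℙ) := Measure.isProbabilityMeasure_map hW.aemeasurable
  have hτ0 : τ.toNNReal ≠ 0 := by
    simp only [ne_eq, Real.toNNReal_eq_zero, not_le]; exact hτ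
  have hZd : Measure.map Z ℙ = volume.withDensity (gaussianPDF 0 τ.toNNReal) := by
    rw [hZg, gaussianReal_of_var_ne_zero 0 hτ0]
  have hconv := map_sum_dens W Z hW hZ hind _ (measurable_gaussianPDF 0 τ.toNNReal) hZd
  have hrw : (fun x => ∫⁻ w, gaussianPDF 0 τ.toNNReal (x - w) ∂(Measure.map W ℙ))
      = fun x => ∫⁻ w, ENNReal.ofReal (gaussDens τ (x - w)) ∂(Measure.map W ℙ) := by
    funext x
    exact lintegral_congr fun w => by simp only [gaussianPDF_def, gaussDens_eq hτ]
  have hfin : ∫⁻ x, ENNReal.ofReal (p x) ∂(volume : Measure ℝ) ≠ ⊤ := by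
    haveI : IsProbabilityMeasure (Measure.map (fun ω => W ω + Z ω) ℙ) :=
      Measure.isProbabilityMeasure_map (hW.add hZ).aemeasurable
    have h1 : (volume.withDensity fun x => ENNReal.ofReal (p x)) univ = 1 := by
      rw [← hp]; exact measure_univ
    rw [withDensity_apply _ MeasurableSet.univ, setLIntegral_univ] at h1
    rw [h1]; exact ENNReal.one_ne_top
  refine dens_identify (Measure.map W ℙ) (fun x w => gaussDens τ (x - w))
    (gaussDens_cont.comp (continuous_fst.sub continuous_snd)) ((Real.sqrt (2 * π * τ))⁻¹)
    (fun z w => gaussDens_pos hτ _) (fun z w => gaussDens_le hτ _) p hpc ?_ hfin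
  rw [← hp, hconv, hrw]

lemma dens_formula_2d [IsProbabilityMeasure (ℙ : Measure Ω)]
    {τ : ℝ} (hτ : 0 < τ) (W Z : Ω → ℝ × ℝ) (hW : Measurable W) (hZ : Measurable Z)
    (hind : IndepFun W Z ℙ)
    (hZg : Measure.map Z ℙ = (volume : Measure (ℝ × ℝ)).withDensity
        (fun z => gaussianPDF 0 τ.toNNReal z.1 * gaussianPDF 0 τ.toNNReal z.2))
    (p : ℝ × ℝ → ℝ)
    (hp : Measure.map (fun ω => W ω + Z ω) ℙ = volume.withDensity fun z => ENNReal.ofReal (p z))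
    (hpc : Continuous p) :
    p = fun z => ∫ w, gaussDens τ (z.1 - w.1) * gaussDens τ (z.2 - w.2) ∂(Measure.map W ℙ) := by
  haveI : IsProbabilityMeasure (Measure.map W ℙ) := Measure.isProbabilityMeasure_map hW.aemeasurable
  have hτ0 : τ.toNNReal ≠ 0 := by
    simp only [ne_eq, Real.toNNReal_eq_zero, not_le]; exact hτ
  have hDmeas : Measurable fun z : ℝ × ℝ =>
      gaussianPDF 0 τ.toNNReal z.1 * gaussianPDF 0 τ.toNNReal z.2 :=
    ((measurable_gaussianPDF 0 _).comp measurable_fst).mul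
      ((measurable_gaussianPDF 0 _).comp measurable_snd)
  have hconv := map_sum_dens W Z hW hZ hind _ hDmeas hZg
  have hrw : (fun z : ℝ × ℝ => ∫⁻ w, (gaussianPDF 0 τ.toNNReal (z - w).1
        * gaussianPDF 0 τ.toNNReal (z - w).2) ∂(Measure.map W ℙ))
      = fun z : ℝ × ℝ => ∫⁻ w, ENNReal.ofReal
          (gaussDens τ (z.1 - w.1) * gaussDens τ (z.2 - w.2)) ∂(Measure.map W ℙ) := by
    funext z
    refine lintegral_congr fun w => ?_
    rw [ENNReal.ofReal_mul (gaussDens_pos hτ _).le]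
    have e1 : (z - w).1 = z.1 - w.1 := rfl
    have e2 : (z - w).2 = z.2 - w.2 := rfl
    simp only [gaussianPDF_def, e1, e2, gaussDens_eq hτ]
  have hfin : ∫⁻ z, ENNReal.ofReal (p z) ∂(volume : Measure (ℝ × ℝ)) ≠ ⊤ := by
    haveI : IsProbabilityMeasure (Measure.map (fun ω => W ω + Z ω) ℙ) :=
      Measure.isProbabilityMeasure_map (hW.add hZ).aemeasurable
    have h1 : (volume.withDensity fun z => ENNReal.ofReal (p z)) univ = 1 := by
      rw [← hp]; exact measure_univ
    rw [withDensity_apply _ MeasurableSet.univ, setLIntegral_univ] at h1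
    rw [h1]; exact ENNReal.one_ne_top
  have hkcont : Continuous fun zw : (ℝ × ℝ) × (ℝ × ℝ) =>
      gaussDens τ (zw.1.1 - zw.2.1) * gaussDens τ (zw.1.2 - zw.2.2) :=
    (gaussDens_cont.comp ((continuous_fst.comp continuous_fst).sub
        (continuous_fst.comp continuous_snd))).mul
      (gaussDens_cont.comp ((continuous_snd.comp continuous_fst).sub
        (continuous_snd.comp continuous_snd)))
  refine dens_identify (Measure.map W ℙ)
    (fun z w => gaussDens τ (z.1 - w.1) * gaussDens τ (z.2 - w.2)) hkcont
    ((Real.sqrt (2 * π * τ))⁻¹ * (Real.sqrt (2 * π * τ))⁻¹)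
    (fun z w => mul_pos (gaussDens_pos hτ _) (gaussDens_pos hτ _))
    (fun z w => mul_le_mul (gaussDens_le hτ _) (gaussDens_le hτ _)
      (gaussDens_pos hτ _).le (by positivity)) p hpc ?_ hfin
  rw [← hp, hconv, hrw]

end PartE

/-- pointwise closeness of the joint density of the perturbed pair to the
product of its marginals, and of the corresponding partial derivatives, in terms of the
mixing coefficient `α(S,T)`. -/
theorem statement18 {Ω : Type} [MeasureSpace Ω] [IsProbabilityMeasure (ℙ : Measure Ω)]
    (τ : ℝ) (hτ : 0 < τ)
    (S T ZS ZT : Ω → ℝ) (hS : Measurable S) (hT : Measurable T)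
    (hZS : IsGaussRV ZS τ) (hZT : IsGaussRV ZT τ) (hind : PerturbIndep S T ZS ZT)
    (X Y : Ω → ℝ) (hX : X = fun ω => S ω + ZS ω) (hY : Y = fun ω => T ω + ZT ω)
    (p : ℝ × ℝ → ℝ) (hp : HasDens2 X Y p) (hpdiff : Differentiable ℝ p)
    (hpcont : Continuous p)
    (pX pY : ℝ → ℝ) (hpX : HasDens X pX) (hpY : HasDens Y pY)
    (hpXdiff : Differentiable ℝ pX) (hpYdiff : Differentiable ℝ pY)
    (hpXcont : Continuous pX) (hpYcont : Continuous pY) :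
    (∀ x y : ℝ, |p (x, y) - pX x * pY y| ≤ 2 / (π * τ) * alphaMix S T) ∧
    (∀ x y : ℝ, |deriv (fun x' => p (x', y)) x - deriv pX x * pY y|
      ≤ 2 * Real.exp (-(1 / 2)) / (π * τ ^ ((3 : ℝ) / 2)) * alphaMix S T) := by
  subst hX hY
  obtain ⟨hindWZ, hindZZ⟩ := hind
  have hZSm := hZS.1
  have hZTm := hZT.1
  have hτ0 : τ.toNNReal ≠ 0 := by
    simp only [ne_eq, Real.toNNReal_eq_zero, not_le]; exact hτ
  have hα0 : 0 ≤ alphaMix S T := alphaMix_nonneg S T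
  -- abbreviations
  set c : ℝ := (Real.sqrt (2 * π * τ))⁻¹ with hc
  have hcpos : 0 < c := by rw [hc]; positivity
  have hcc : c * c = (2 * π * τ)⁻¹ := by
    rw [hc, ← mul_inv, Real.mul_self_sqrt (by positivity)]
  -- marginal densities
  have hindS : IndepFun S ZS ℙ := hindWZ.comp measurable_fst measurable_fst
  have hindT : IndepFun T ZT ℙ := hindWZ.comp measurable_snd measurable_snd
  have hq1 : pX = fun x => ∫ w, gaussDens τ (x - w) ∂(Measure.map S ℙ) :=
    dens_formula_1d hτ S ZS hS hZSm hindS hZS.2 pX hpX.2 hpXcont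
  have hq2 : pY = fun y => ∫ w, gaussDens τ (y - w) ∂(Measure.map T ℙ) :=
    dens_formula_1d hτ T ZT hT hZTm hindT hZT.2 pY hpY.2 hpYcont
  -- joint density
  set Wp : Ω → ℝ × ℝ := fun ω => (S ω, T ω) with hWp
  set Zp : Ω → ℝ × ℝ := fun ω => (ZS ω, ZT ω) with hZp
  have hWpm : Measurable Wp := hS.prodMk hT
  have hZpm : Measurable Zp := hZSm.prodMk hZTm
  haveI : IsProbabilityMeasure (Measure.map Wp ℙ) := Measure.isProbabilityMeasure_map hWpm.aemeasurable
  haveI : IsProbabilityMeasure (Measure.map S ℙ) := Measure.isProbabilityMeasure_map hS.aemeasurable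
  haveI : IsProbabilityMeasure (Measure.map T ℙ) := Measure.isProbabilityMeasure_map hT.aemeasurable
  have hZpd : Measure.map Zp ℙ = (volume : Measure (ℝ × ℝ)).withDensity
      (fun z => gaussianPDF 0 τ.toNNReal z.1 * gaussianPDF 0 τ.toNNReal z.2) := by
    rw [hZp,
      (indepFun_iff_map_prod_eq_prod_map_map hZSm.aemeasurable hZTm.aemeasurable).mp hindZZ,
      hZS.2, hZT.2, gauss_prod _ hτ0]
  have hpmap : Measure.map (fun ω => Wp ω + Zp ω) ℙ
      = volume.withDensity fun z => ENNReal.ofReal (p z) := hp.2.2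
  have hqJ : p = fun z => ∫ w, gaussDens τ (z.1 - w.1) * gaussDens τ (z.2 - w.2)
      ∂(Measure.map Wp ℙ) :=
    dens_formula_2d hτ Wp Zp hWpm hZpm hindWZ hZpd p hpmap hpcont
  constructor
  · -- part (i)
    intro x y
    set f1 : ℝ → ℝ := fun s => gaussDens τ (x - s) with hf1
    set g1 : ℝ → ℝ := fun t => gaussDens τ (y - t) with hg1
    have hf1c : Continuous f1 := gaussDens_cont.comp (continuous_const.sub continuous_id)
    have hg1c : Continuous g1 := gaussDens_cont.comp (continuous_const.sub continuous_id)
    have hpxy : p (x, y) = ∫ ω, f1 (S ω) * g1 (T ω) ∂ℙ := by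
      rw [hqJ]
      exact integral_map hWpm.aemeasurable
        (((hf1c.comp continuous_fst).mul (hg1c.comp continuous_snd)).aestronglyMeasurable)
    have hpXx : pX x = ∫ ω, f1 (S ω) ∂ℙ := by
      rw [hq1]
      exact integral_map hS.aemeasurable hf1c.aestronglyMeasurable
    have hpYy : pY y = ∫ ω, g1 (T ω) ∂ℙ := by
      rw [hq2]
      exact integral_map hT.aemeasurable hg1c.aestronglyMeasurable
    rw [hpxy, hpXx, hpYy]
    have hb := key_cov S T hS hT f1 g1 hf1c.measurable hg1c.measurable c c hcpos hcpos
      (fun s => (gaussDens_pos hτ _).le) (fun s => gaussDens_le hτ _)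
      (fun t => (gaussDens_pos hτ _).le) (fun t => gaussDens_le hτ _)
    refine hb.trans ?_
    have hnum : c * c ≤ 2 / (π * τ) := by
      rw [hcc, inv_eq_one_div, div_le_div_iff₀ (by positivity) (by positivity)]
      nlinarith [Real.pi_pos, hτ]
    exact mul_le_mul_of_nonneg_right hnum hα0
  · -- part (ii)
    intro x y
    set f2 : ℝ → ℝ := fun s => -((x - s) / τ) * gaussDens τ (x - s) with hf2
    set g1 : ℝ → ℝ := fun t => gaussDens τ (y - t) with hg1
    have hg1c : Continuous g1 := gaussDens_cont.comp (continuous_const.sub continuous_id)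
    have hf2m : Measurable f2 := by
      refine Measurable.mul ?_ (gaussDens_cont.measurable.comp (measurable_const.sub measurable_id))
      exact ((measurable_const.sub measurable_id).div_const τ).neg
    set M2 : ℝ := Real.exp (-(1/2)) * (Real.sqrt τ)⁻¹ * c with hM2
    have hM2pos : 0 < M2 := by rw [hM2, hc]; positivity
    -- derivative of the joint density in the first variable
    have hpd : HasDerivAt (fun x' => p (x', y))
        (∫ w, -((x - w.1) / τ) * gaussDens τ (x - w.1) * gaussDens τ (y - w.2)
          ∂(Measure.map Wp ℙ)) x := by
      have h0 := hasDerivAt_gauss_integral (Measure.map Wp ℙ) hτ (fun w : ℝ × ℝ => w.1)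
        (fun w : ℝ × ℝ => gaussDens τ (y - w.2)) measurable_fst
        (gaussDens_cont.measurable.comp (measurable_const.sub measurable_snd)) c
        (fun w => (gaussDens_pos hτ _).le) (fun w => gaussDens_le hτ _) x
      have heq : (fun x' => p (x', y))
          = fun x' => ∫ w, gaussDens τ (x' - w.1) * gaussDens τ (y - w.2)
              ∂(Measure.map Wp ℙ) := by
        funext x'
        rw [hqJ]
      rw [heq]
      exact h0
    -- derivative of the marginal density
    have hpXd : HasDerivAt pX
        (∫ w, -((x - w) / τ) * gaussDens τ (x - w) * 1 ∂(Measure.map S ℙ)) x := by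
      have h0 := hasDerivAt_gauss_integral (Measure.map S ℙ) hτ id (fun _ => (1:ℝ))
        measurable_id measurable_const 1 (fun _ => zero_le_one) (fun _ => le_refl 1) x
      have heq : pX = fun x => ∫ w, gaussDens τ (x - id w) * 1 ∂(Measure.map S ℙ) := by
        rw [hq1]
        funext x
        simp only [id_eq, mul_one]
      rw [heq]
      exact h0
    have hderivJ : deriv (fun x' => p (x', y)) x
        = ∫ ω, f2 (S ω) * g1 (T ω) ∂ℙ := by
      rw [hpd.deriv]
      exact integral_map (f := fun w : ℝ × ℝ => f2 w.1 * g1 w.2) hWpm.aemeasurable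
        ((hf2m.comp measurable_fst).mul
          (hg1c.measurable.comp measurable_snd)).aestronglyMeasurable
    have hderivX : deriv pX x = ∫ ω, f2 (S ω) ∂ℙ := by
      rw [hpXd.deriv]
      have h1 : ∫ w, -((x - w) / τ) * gaussDens τ (x - w) * 1 ∂(Measure.map S ℙ)
          = ∫ w, f2 w ∂(Measure.map S ℙ) := by
        refine integral_congr_ae (Eventually.of_forall fun w => ?_)
        simp [hf2]
      rw [h1]
      exact integral_map hS.aemeasurable hf2m.aestronglyMeasurable
    have hpYy : pY y = ∫ ω, g1 (T ω) ∂ℙ := by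
      rw [hq2]
      exact integral_map hT.aemeasurable hg1c.aestronglyMeasurable
    rw [hderivJ, hderivX, hpYy]
    have hb := key_cov_signed S T hS hT f2 g1 hf2m hg1c.measurable M2 c hM2pos hcpos
      (fun s => gaussDeriv_abs_le hτ _) (fun t => (gaussDens_pos hτ _).le)
      (fun t => gaussDens_le hτ _)
    refine hb.trans ?_
    have h32 : τ ^ ((3:ℝ)/2) = τ * Real.sqrt τ := by
      rw [show ((3:ℝ)/2) = 1 + 1/2 by norm_num, Real.rpow_add hτ, Real.rpow_one,
        Real.sqrt_eq_rpow]
    have hsτ : 0 < Real.sqrt τ := Real.sqrt_pos.mpr hτ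
    have heq : 2 * M2 * c = Real.exp (-(1/2)) / (π * (τ * Real.sqrt τ)) := by
      have e1 : 2 * M2 * c = 2 * Real.exp (-(1/2)) * (Real.sqrt τ)⁻¹ * (c * c) := by
        rw [hM2]; ring
      rw [e1, hcc]
      field_simp
    have hnum : 2 * M2 * c ≤ 2 * Real.exp (-(1/2)) / (π * τ ^ ((3:ℝ)/2)) := by
      rw [heq, h32]
      gcongr
      linarith [Real.exp_pos (-(1/2:ℝ))]
    exact mul_le_mul_of_nonneg_right hnum hα0
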